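/- arXiv:1803.06380 — 2 statements merged into one kernel-verified Lean document; each statement's English description precedes it below -/
import Mathlib

section
/- Suppose each f_i: R^p → R is convex and differentiable and the graph with Laplacian L is connected. If (v̄, x̄, ȳ) satisfies ȳ = 0, −θ v̄ − α ∇f(x̄) = 0, (L⊗I_p) x̄ = 0, and Σᵢ v̄ᵢ = 0 (with α, θ > 0), then x̄ = 1_n ⊗ x⁰ for some x⁰ ∈ R^p with Σᵢ ∇f_i(x⁰) = 0; in particular x⁰ is a global minimizer of Σᵢ f_i. -/
open scoped RealInnerProductSpace

lemma first_order {E : Type*} [NormedAddCommGroup E] [InnerProductSpace ℝ E] [CompleteSpace E]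
    {f : E → ℝ} {G x z : E} (hconv : ConvexOn ℝ Set.univ f)
    (hgrad : HasGradientAt f G x) :
    f x + ⟪G, z - x⟫ ≤ f z := by
  rcases eq_or_ne z x with rfl | hzx
  · simp
  set φ : ℝ → ℝ := f ∘ (AffineMap.lineMap x z) with hφ
  have hφconv : ConvexOn ℝ Set.univ φ := by
    have := hconv.comp_affineMap (AffineMap.lineMap x z (k := ℝ))
    simpa using this
  have hd : HasDerivAt φ ⟪G, z - x⟫ 0 := by
    have h1 : HasDerivAt (AffineMap.lineMap x z : ℝ → E) (z - x) 0 := AffineMap.hasDerivAt_lineMap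
    have h2 : HasFDerivAt f (InnerProductSpace.toDual ℝ E G : E →L[ℝ] ℝ)
        ((AffineMap.lineMap x z : ℝ → E) 0) := by
      simpa [AffineMap.lineMap_apply_zero] using hgrad.hasFDerivAt
    simpa using h2.comp_hasDerivAt 0 h1
  have hs := hφconv.le_slope_of_hasDerivAt (Set.mem_univ 0) (Set.mem_univ 1)
    one_pos hd
  have : slope φ 0 1 = f z - f x := by
    simp [slope_def_field, hφ, AffineMap.lineMap_apply_zero, AffineMap.lineMap_apply_one]
  rw [this] at hs
  linarith

/-- If `(v̄, x̄, ȳ)` is an equilibrium point, i.e. `ȳ = 0`,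
`−θv̄ − α∇f(x̄) = 0`, `(L⊗I_p)x̄ = 0` and `Σᵢ v̄ᵢ = 0`, with `L` the Laplacian of a
connected graph and each `fᵢ` convex differentiable, then `x̄ = 1ₙ ⊗ x⁰` for some
`x⁰` with `Σᵢ ∇fᵢ(x⁰) = 0`; in particular `x⁰ is a global minimizer of `Σᵢ fᵢ`. -/
theorem equilibrium_is_minimizer {n p : ℕ}
    (f : Fin n → EuclideanSpace ℝ (Fin p) → ℝ)
    (g : Fin n → EuclideanSpace ℝ (Fin p) → EuclideanSpace ℝ (Fin p))
    (hconv : ∀ i, ConvexOn ℝ Set.univ (f i))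
    (hgrad : ∀ i x, HasGradientAt (f i) (g i x) x)
    (L : Matrix (Fin n) (Fin n) ℝ)
    (hker : ∀ w : Fin n → EuclideanSpace ℝ (Fin p),
      (∀ i, ∑ j, L i j • w j = 0) → ∃ c, ∀ i, w i = c)
    (α θ : ℝ) (hα : 0 < α) (hθ : 0 < θ)
    (xbar vbar ybar : Fin n → EuclideanSpace ℝ (Fin p))
    (hybar : ∀ i, ybar i = 0)
    (heq : ∀ i, -(θ • vbar i) - α • g i (xbar i) = 0)
    (hLx : ∀ i, ∑ j, L i j • xbar j = 0)
    (hvsum : ∑ i, vbar i = 0) :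
    ∃ x0 : EuclideanSpace ℝ (Fin p),
      (∀ i, xbar i = x0) ∧ (∑ i, g i x0 = 0) ∧
      ∀ z : EuclideanSpace ℝ (Fin p), ∑ i, f i x0 ≤ ∑ i, f i z := by
  obtain ⟨x0, hx0⟩ := hker xbar hLx
  have hg : ∀ i, α • g i x0 = -(θ • vbar i) := by
    intro i
    have := heq i
    rw [hx0 i] at this
    have h := sub_eq_zero.mp this
    rw [← h]
  have hgsum : ∑ i, g i x0 = 0 := by
    have h1 : α • ∑ i, g i x0 = -(θ • ∑ i, vbar i) := by
      rw [Finset.smul_sum, Finset.smul_sum, ← Finset.sum_neg_distrib]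
      exact Finset.sum_congr rfl fun i _ => hg i
    rw [hvsum, smul_zero, neg_zero] at h1
    exact (smul_eq_zero.mp h1).resolve_left hα.ne'
  refine ⟨x0, hx0, hgsum, fun z => ?_⟩
  have key : ∀ i, f i x0 + ⟪g i x0, z - x0⟫ ≤ f i z :=
    fun i => first_order (hconv i) (hgrad i x0)
  have hsum := Finset.sum_le_sum (fun i (_ : i ∈ Finset.univ) => key i)
  rw [Finset.sum_add_distrib, ← sum_inner, hgsum, inner_zero_left, add_zero] at hsum
  exact hsum
end

section
/- Let L be a graph Laplacian on n vertices. For any vectors e₁,…,e_n and x̂₁,…,x̂_n in R^p, letting e and x̂ denote their stacked versions, one has eᵀ(L⊗I_p)x̂ ≤ Σᵢ L_{ii}‖eᵢ‖² − (1/4) Σᵢ Σⱼ L_{ij}‖x̂ⱼ − x̂ᵢ‖². -/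
open Finset
open scoped RealInnerProductSpace

/-- For a graph Laplacian `L` and any vectors `e₁,…,eₙ, x̂₁,…,x̂ₙ`,
`eᵀ(L⊗I_p)x̂ ≤ Σᵢ L_{ii}‖eᵢ‖² − (1/4) Σᵢ Σⱼ L_{ij}‖x̂ⱼ − x̂ᵢ‖²`. -/
theorem eLx_bound {n p : ℕ} (L : Matrix (Fin n) (Fin n) ℝ)
    (hLsym : L.IsSymm)
    (hoffdiag : ∀ i j, i ≠ j → L i j ≤ 0)
    (hrow : ∀ i, ∑ j, L i j = 0)
    (e xhat : Fin n → EuclideanSpace ℝ (Fin p)) :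
    ∑ i, ∑ j, L i j * ⟪e i, xhat j⟫ ≤
      ∑ i, L i i * ‖e i‖ ^ 2 - (1 / 4) * ∑ i, ∑ j, L i j * ‖xhat j - xhat i‖ ^ 2 := by
  set B : Fin n → Fin n → ℝ := fun i j =>
    if j = i then 0 else (-L i j) * (‖e i‖ ^ 2 + (1 / 4) * ‖xhat j - xhat i‖ ^ 2) with hB
  -- Step 1: rewrite LHS
  have step1 : ∑ i, ∑ j, L i j * ⟪e i, xhat j⟫
      = ∑ i, ∑ j, L i j * ⟪e i, xhat j - xhat i⟫ := by
    refine Finset.sum_congr rfl fun i _ => ?_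
    have : ∑ j, L i j * ⟪e i, xhat j - xhat i⟫
        = ∑ j, (L i j * ⟪e i, xhat j⟫ - L i j * ⟪e i, xhat i⟫) := by
      refine Finset.sum_congr rfl fun j _ => ?_
      rw [inner_sub_right]; ring
    rw [this, Finset.sum_sub_distrib, ← Finset.sum_mul, hrow i]
    ring
  -- Step 2: termwise bound
  have step2 : ∑ i, ∑ j, L i j * ⟪e i, xhat j - xhat i⟫ ≤ ∑ i, ∑ j, B i j := by
    refine Finset.sum_le_sum fun i _ => Finset.sum_le_sum fun j _ => ?_
    by_cases hij : j = i
    · simp [hB, hij]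
    · simp only [hB, if_neg hij]
      have hL : -L i j ≥ 0 := by
        have := hoffdiag i j (fun h => hij h.symm)
        linarith
      have h1 : L i j * ⟪e i, xhat j - xhat i⟫ ≤ (-L i j) * (‖e i‖ * ‖xhat j - xhat i‖) := by
        have habs : -⟪e i, xhat j - xhat i⟫ ≤ ‖e i‖ * ‖xhat j - xhat i‖ := by
          have := abs_real_inner_le_norm (e i) (xhat j - xhat i)
          have := neg_abs_le ⟪e i, xhat j - xhat i⟫
          linarith
        nlinarith [mul_le_mul_of_nonneg_left habs hL]
      have h2 : ‖e i‖ * ‖xhat j - xhat i‖ ≤ ‖e i‖ ^ 2 + (1 / 4) * ‖xhat j - xhat i‖ ^ 2 := by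
        nlinarith [sq_nonneg (‖e i‖ - ‖xhat j - xhat i‖ / 2)]
      calc L i j * ⟪e i, xhat j - xhat i⟫ ≤ (-L i j) * (‖e i‖ * ‖xhat j - xhat i‖) := h1
        _ ≤ (-L i j) * (‖e i‖ ^ 2 + (1 / 4) * ‖xhat j - xhat i‖ ^ 2) :=
            mul_le_mul_of_nonneg_left h2 hL
  -- Step 3: compute the sum of bounds
  have step3 : ∑ i, ∑ j, B i j
      = ∑ i, L i i * ‖e i‖ ^ 2 - (1 / 4) * ∑ i, ∑ j, L i j * ‖xhat j - xhat i‖ ^ 2 := by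
    have hsplit : ∀ i j, B i j = (-L i j) * ((1 / 4) * ‖xhat j - xhat i‖ ^ 2)
        + (if j = i then 0 else (-L i j) * ‖e i‖ ^ 2) := by
      intro i j
      by_cases hij : j = i
      · simp [hB, hij]
      · simp only [hB, if_neg hij]; ring
    have : ∑ i, ∑ j, B i j = ∑ i, (∑ j, (-L i j) * ((1 / 4) * ‖xhat j - xhat i‖ ^ 2)
        + ∑ j, (if j = i then 0 else (-L i j) * ‖e i‖ ^ 2)) := by
      refine Finset.sum_congr rfl fun i _ => ?_
      rw [← Finset.sum_add_distrib]
      exact Finset.sum_congr rfl fun j _ => hsplit i j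
    rw [this, Finset.sum_add_distrib]
    have h1 : ∑ i, ∑ j, (-L i j) * ((1 / 4) * ‖xhat j - xhat i‖ ^ 2)
        = -(1 / 4) * ∑ i, ∑ j, L i j * ‖xhat j - xhat i‖ ^ 2 := by
      rw [Finset.mul_sum]
      refine Finset.sum_congr rfl fun i _ => ?_
      rw [Finset.mul_sum]
      exact Finset.sum_congr rfl fun j _ => by ring
    have h2 : ∀ i, ∑ j, (if j = i then 0 else (-L i j) * ‖e i‖ ^ 2) = L i i * ‖e i‖ ^ 2 := by
      intro i
      have : ∑ j, (if j = i then 0 else (-L i j) * ‖e i‖ ^ 2)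
          = ∑ j, ((-L i j) * ‖e i‖ ^ 2 - if j = i then (-L i i) * ‖e i‖ ^ 2 else 0) := by
        refine Finset.sum_congr rfl fun j _ => ?_
        by_cases hij : j = i
        · simp [hij]
        · simp [hij]
      rw [this, Finset.sum_sub_distrib, Finset.sum_ite_eq' Finset.univ i
        (fun _ => (-L i i) * ‖e i‖ ^ 2), if_pos (Finset.mem_univ i)]
      have hz : ∑ j, (-L i j) * ‖e i‖ ^ 2 = 0 := by
        rw [← Finset.sum_mul]
        have : ∑ j, -L i j = 0 := by
          simp [hrow i]
        rw [this, zero_mul]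
      rw [hz]; ring
    rw [h1, Finset.sum_congr rfl fun i _ => h2 i]
    ring
  rw [step1]
  calc ∑ i, ∑ j, L i j * ⟪e i, xhat j - xhat i⟫ ≤ ∑ i, ∑ j, B i j := step2
    _ = _ := step3
end
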